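/- arXiv:2412.10295 — 3 statements merged into one kernel-verified Lean document; each statement's English description precedes it below -/
import Mathlib

section
/- For s > 0, the function f(r) = r^{-s} e^{r} γ(s,r) is increasing on (0,∞), where γ(s,r) = ∫₀^r z^{s-1} e^{-z} dz is the lower incomplete gamma function. -/
/-- The lower incomplete gamma function `γ(s,r) = ∫₀^r z^{s-1} e^{-z} dz`. -/
noncomputable def lowerGamma (s r : ℝ) : ℝ :=
  ∫ z in Set.Ioc (0:ℝ) r, z ^ (s - 1) * Real.exp (-z)

lemma lowerGamma_key (s : ℝ) (hs : 0 < s) {r : ℝ} (hr : 0 < r) :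
    r ^ (-s) * Real.exp r * lowerGamma s r
      = ∫ t in (0:ℝ)..1, t ^ (s - 1) * Real.exp (r * (1 - t)) := by
  have h1 : lowerGamma s r = ∫ z in (0:ℝ)..r, z ^ (s - 1) * Real.exp (-z) := by
    rw [intervalIntegral.integral_of_le hr.le]; rfl
  have h2 := intervalIntegral.integral_comp_mul_left (a := 0) (b := 1)
    (fun z => z ^ (s - 1) * Real.exp (-z)) hr.ne'
  simp only [mul_zero, mul_one] at h2
  have h3 : (∫ z in (0:ℝ)..r, z ^ (s - 1) * Real.exp (-z))
      = r * ∫ t in (0:ℝ)..1, (r * t) ^ (s - 1) * Real.exp (-(r * t)) := by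
    rw [h2, smul_eq_mul, ← mul_assoc, mul_inv_cancel₀ hr.ne', one_mul]
  have h4 : (∫ t in (0:ℝ)..1, (r * t) ^ (s - 1) * Real.exp (-(r * t)))
      = r ^ (s - 1) * ∫ t in (0:ℝ)..1, t ^ (s - 1) * Real.exp (-(r * t)) := by
    rw [← intervalIntegral.integral_const_mul]
    apply intervalIntegral.integral_congr
    intro t ht
    rw [Set.uIcc_of_le (by norm_num : (0:ℝ) ≤ 1)] at ht
    have ht0 : 0 ≤ t := ht.1
    dsimp only
    rw [Real.mul_rpow hr.le ht0]
    ring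
  rw [h1, h3, h4]
  have h5 : ∀ t : ℝ, t ^ (s - 1) * Real.exp (r * (1 - t))
      = Real.exp r * (t ^ (s - 1) * Real.exp (-(r * t))) := by
    intro t
    rw [show r * (1 - t) = r + -(r * t) by ring, Real.exp_add]
    ring
  simp_rw [h5]
  rw [intervalIntegral.integral_const_mul]
  have hpow : r ^ (-s) * r * r ^ (s - 1) = 1 := by
    rw [show r ^ (-s) * r * r ^ (s - 1) = r ^ (-s) * r ^ (1:ℝ) * r ^ (s - 1) by
        rw [Real.rpow_one], ← Real.rpow_add hr, ← Real.rpow_add hr]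
    norm_num
  calc r ^ (-s) * Real.exp r *
        (r * (r ^ (s - 1) * ∫ t in (0:ℝ)..1, t ^ (s - 1) * Real.exp (-(r * t))))
      = (r ^ (-s) * r * r ^ (s - 1)) * (Real.exp r *
        ∫ t in (0:ℝ)..1, t ^ (s - 1) * Real.exp (-(r * t))) := by ring
    _ = Real.exp r * ∫ t in (0:ℝ)..1, t ^ (s - 1) * Real.exp (-(r * t)) := by
        rw [hpow, one_mul]

lemma intble (s : ℝ) (hs : 0 < s) (r : ℝ) :
    IntervalIntegrable (fun t => t ^ (s - 1) * Real.exp (r * (1 - t)))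
      MeasureTheory.volume 0 1 := by
  apply IntervalIntegrable.mul_continuousOn
  · exact intervalIntegral.intervalIntegrable_rpow' (by linarith)
  · exact (Real.continuous_exp.comp (by continuity)).continuousOn

/-- For `s > 0`, the function `r ↦ r^{-s} e^r γ(s,r)` is increasing on `(0,∞)`. -/
theorem stmt3 (s : ℝ) (hs : 0 < s) :
    MonotoneOn (fun r : ℝ => r ^ (-s) * Real.exp r * lowerGamma s r) (Set.Ioi 0) := by
  intro r1 hr1 r2 hr2 h12
  simp only [Set.mem_Ioi] at hr1 hr2
  dsimp only
  rw [lowerGamma_key s hs hr1, lowerGamma_key s hs hr2]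
  apply intervalIntegral.integral_mono_on (by norm_num) (intble s hs r1) (intble s hs r2)
  intro t ht
  have ht0 : 0 ≤ t := ht.1
  have ht1 : t ≤ 1 := ht.2
  have : Real.exp (r1 * (1 - t)) ≤ Real.exp (r2 * (1 - t)) := by
    apply Real.exp_le_exp.mpr
    nlinarith
  exact mul_le_mul_of_nonneg_left this (Real.rpow_nonneg ht0 _)
end

section
/- For s > 0, the function g(r) = r^{-s} e^{r} Γ(s,r) is decreasing on (0,∞) and satisfies lim_{r→∞} g(r) = 0, where Γ(s,r) = ∫_r^∞ z^{s-1} e^{-z} dz is the upper incomplete gamma function. -/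
open Set MeasureTheory Real Filter

noncomputable def upperGamma (s r : ℝ) : ℝ :=
  ∫ z in Set.Ioi r, z ^ (s - 1) * Real.exp (-z)

lemma intOn (s : ℝ) (hs : 0 < s) {r : ℝ} (hr : 0 < r) :
    IntegrableOn (fun t : ℝ => t ^ (s - 1) * Real.exp (-(r * (t - 1)))) (Set.Ioi 1) := by
  have h0 : IntegrableOn (fun z : ℝ => Real.exp (-z) * z ^ (s - 1)) (Set.Ioi r) :=
    (Real.GammaIntegral_convergent hs).mono_set (Set.Ioi_subset_Ioi hr.le)
  have h1 : IntegrableOn (fun t : ℝ => Real.exp (-(r * t)) * (r * t) ^ (s - 1)) (Set.Ioi 1) := by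
    have := (integrableOn_Ioi_comp_mul_left_iff
      (fun z : ℝ => Real.exp (-z) * z ^ (s - 1)) 1 hr).mpr
    simpa using this (by simpa using h0)
  have h2 : IntegrableOn (fun t : ℝ => Real.exp r * (r ^ (1 - s) *
      (Real.exp (-(r * t)) * (r * t) ^ (s - 1)))) (Set.Ioi 1) :=
    (h1.const_mul _).const_mul _
  refine h2.congr_fun (fun t ht => ?_) measurableSet_Ioi
  have ht0 : (0:ℝ) < t := lt_trans one_pos ht
  have e1 : (r * t) ^ (s - 1) = r ^ (s - 1) * t ^ (s - 1) := Real.mul_rpow hr.le ht0.le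
  have e2 : r ^ (1 - s) * r ^ (s - 1) = 1 := by
    rw [← Real.rpow_add hr]; norm_num
  have e3 : Real.exp r * Real.exp (-(r * t)) = Real.exp (-(r * (t - 1))) := by
    rw [← Real.exp_add]; ring_nf
  calc Real.exp r * (r ^ (1 - s) * (Real.exp (-(r * t)) * (r * t) ^ (s - 1)))
      = (r ^ (1 - s) * r ^ (s - 1)) * (Real.exp r * Real.exp (-(r * t))) * t ^ (s - 1) := by
        rw [e1]; ring
    _ = t ^ (s - 1) * Real.exp (-(r * (t - 1))) := by rw [e2, e3]; ring

lemma key (s : ℝ) (hs : 0 < s) {r : ℝ} (hr : 0 < r) :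
    r ^ (-s) * Real.exp r * upperGamma s r
      = ∫ t in Set.Ioi 1, t ^ (s - 1) * Real.exp (-(r * (t - 1))) := by
  have hsub := integral_comp_mul_left_Ioi (fun z : ℝ => z ^ (s - 1) * Real.exp (-z)) 1 hr
  simp only [mul_one, smul_eq_mul] at hsub
  have h2 : (∫ t in Set.Ioi 1, (r * t) ^ (s - 1) * Real.exp (-(r * t)))
      = r ^ (s - 1) * ∫ t in Set.Ioi 1, t ^ (s - 1) * Real.exp (-(r * t)) := by
    rw [← integral_const_mul]
    refine setIntegral_congr_fun measurableSet_Ioi (fun t ht => ?_)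
    have ht0 : (0:ℝ) < t := lt_trans one_pos ht
    rw [Real.mul_rpow hr.le ht0.le]; ring
  have hX : (∫ t in Set.Ioi 1, t ^ (s - 1) * Real.exp (-(r * t)))
      = r ^ (-s) * upperGamma s r := by
    have hrs : r ^ (s - 1) ≠ 0 := (Real.rpow_pos_of_pos hr _).ne'
    have : r ^ (s - 1) * ∫ t in Set.Ioi 1, t ^ (s - 1) * Real.exp (-(r * t))
        = r⁻¹ * upperGamma s r := by rw [← h2, hsub]; rfl
    have hrr : r ^ (s - 1) * r = r ^ s := by
      nth_rewrite 2 [show s = (s - 1) + 1 by ring]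
      rw [Real.rpow_add_one hr.ne']
    have h3 : r ^ s * (∫ t in Set.Ioi 1, t ^ (s - 1) * Real.exp (-(r * t)))
        = upperGamma s r := by
      rw [← hrr]
      field_simp at this
      linear_combination this
    rw [Real.rpow_neg hr.le, ← h3, inv_mul_cancel_left₀ (Real.rpow_pos_of_pos hr s).ne']
  have h1 : (∫ t in Set.Ioi 1, t ^ (s - 1) * Real.exp (-(r * (t - 1))))
      = Real.exp r * ∫ t in Set.Ioi 1, t ^ (s - 1) * Real.exp (-(r * t)) := by
    rw [← integral_const_mul]
    refine setIntegral_congr_fun measurableSet_Ioi (fun t ht => ?_)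
    rw [show Real.exp r * (t ^ (s-1) * Real.exp (-(r*t)))
        = t ^ (s-1) * (Real.exp r * Real.exp (-(r*t))) by ring, ← Real.exp_add]
    ring_nf
  rw [h1, hX]; ring

/-- For `s > 0`, the function `g(r) = r^{-s} e^r Γ(s,r)` is decreasing on `(0,∞)`
and tends to `0` as `r → ∞`. -/
theorem stmt4 (s : ℝ) (hs : 0 < s) :
    AntitoneOn (fun r : ℝ => r ^ (-s) * Real.exp r * upperGamma s r) (Set.Ioi 0) ∧
    Filter.Tendsto (fun r : ℝ => r ^ (-s) * Real.exp r * upperGamma s r)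
      Filter.atTop (nhds 0) := by
  constructor
  · intro r1 hr1 r2 hr2 h12
    simp only []
    rw [key s hs hr1, key s hs hr2]
    refine setIntegral_mono_on (intOn s hs hr2) (intOn s hs hr1) measurableSet_Ioi
      (fun t ht => ?_)
    have ht1 : (1:ℝ) < t := ht
    refine mul_le_mul_of_nonneg_left ?_ (Real.rpow_nonneg (by linarith) _)
    refine Real.exp_le_exp.mpr ?_
    have : r1 * (t - 1) ≤ r2 * (t - 1) :=
      mul_le_mul_of_nonneg_right h12 (by linarith)
    linarith
  · have heq : ∀ᶠ r : ℝ in atTop,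
        (∫ t in Set.Ioi 1, t ^ (s - 1) * Real.exp (-(r * (t - 1))))
          = r ^ (-s) * Real.exp r * upperGamma s r := by
      filter_upwards [eventually_gt_atTop (0:ℝ)] with r hr
      exact (key s hs hr).symm
    refine Tendsto.congr' heq ?_
    have h0 : Filter.Tendsto (fun r : ℝ =>
        ∫ t in Set.Ioi 1, t ^ (s - 1) * Real.exp (-(r * (t - 1))))
        atTop (nhds (∫ _ : ℝ in Set.Ioi (1:ℝ), (0:ℝ))) := by
      refine tendsto_integral_filter_of_dominated_convergence
        (fun t => t ^ (s - 1) * Real.exp (-(1 * (t - 1)))) ?_ ?_ ?_ ?_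
      · filter_upwards [eventually_gt_atTop (0:ℝ)] with r hr
        exact (intOn s hs hr).1
      · filter_upwards [eventually_ge_atTop (1:ℝ)] with r hr
        rw [ae_restrict_iff' measurableSet_Ioi]
        refine Filter.Eventually.of_forall (fun t ht => ?_)
        have ht1 : (1:ℝ) < t := ht
        have h1 : (0:ℝ) ≤ t ^ (s - 1) := Real.rpow_nonneg (by linarith) _
        rw [Real.norm_eq_abs, abs_mul, abs_of_nonneg h1, abs_of_nonneg (Real.exp_pos _).le]
        refine mul_le_mul_of_nonneg_left (Real.exp_le_exp.mpr ?_) h1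
        have : 1 * (t - 1) ≤ r * (t - 1) := mul_le_mul_of_nonneg_right hr (by linarith)
        linarith
      · exact intOn s hs one_pos
      · rw [ae_restrict_iff' measurableSet_Ioi]
        refine Filter.Eventually.of_forall (fun t ht => ?_)
        have ht1 : (1:ℝ) < t := ht
        have h1 : Filter.Tendsto (fun r : ℝ => r * (t - 1)) atTop atTop :=
          Filter.tendsto_id.atTop_mul_const (by linarith)
        have h2 : Filter.Tendsto (fun r : ℝ => Real.exp (-(r * (t - 1)))) atTop (nhds 0) :=
          Real.tendsto_exp_atBot.comp (Filter.tendsto_neg_atBot_iff.mpr h1)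
        simpa using h2.const_mul (t ^ (s - 1))
    simpa using h0
end

section
/- Suppose the Stein-log-Sobolev inequality with exponent α ≥ 1 holds, i.e. λ·[KL(ρ||ρ_∞)]^α ≤ D²(ρ||ρ_∞) for all admissible ρ, where V is γ-homogeneous with γ > 0, ∇V is (γ-1)-homogeneous, k is β-homogeneous with β < 0, K(x,y) = k(x-y), and the double integral ∫∫ ∇V(x)·k(x-y)∇V(y) dρ_∞(y) dρ_∞(x) is finite. Then evaluating at the dilated measures (S_λ)_# ρ_∞ with S_λ(x) = λx yields, as λ → ∞, the necessary condition α·γ ≤ β + 2(γ - 1). In particular, if (α-2)γ > β - 2, the inequality fails. -/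
/-! Along the dilations, `KL ≍ l^γ` because `log l = o(l^γ)`, while `D² ≤ I l^{β+2(γ-1)}`
for `l ≥ 1`. The inequality `λ KL^α ≤ D²` therefore forces `l^{αγ} ≲ l^{β+2(γ-1)}` as
`l → ∞`, which is only possible if `αγ ≤ β + 2(γ-1)`. -/

open Filter Asymptotics

theorem le_of_eventually_mul_rpow_le {p q c C : ℝ} (hc : 0 < c)
    (h : ∀ᶠ l : ℝ in atTop, c * l ^ p ≤ C * l ^ q) : p ≤ q := by
  by_contra! hqp
  have hgrow := (tendsto_rpow_atTop (sub_pos.2 hqp)).eventually_gt_atTop (C / c)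
  obtain ⟨l, ⟨hle, hgt⟩, hl0⟩ := ((h.and hgrow).and (eventually_gt_atTop 0)).exists
  rw [Real.rpow_sub hl0, div_lt_div_iff₀ hc (Real.rpow_pos_of_pos hl0 q)] at hgt
  linarith

theorem eventually_half_mul_rpow_le_sub_log {γ c : ℝ} (hγ : 0 < γ) (hc : 0 < c) (a : ℝ) :
    ∀ᶠ l : ℝ in atTop, c / 2 * l ^ γ ≤ (l ^ γ - 1) * c - a * Real.log l := by
  have hlittle : (fun l : ℝ => c + a * Real.log l) =o[atTop] fun l => l ^ γ :=
    (isLittleO_const_left.2 <| Or.inr <| tendsto_norm_atTop_atTop.comp (tendsto_rpow_atTop hγ)).add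
      ((isLittleO_log_rpow_atTop hγ).const_mul_left a)
  filter_upwards [hlittle.bound (half_pos hc), eventually_ge_atTop 0] with l hl hl0
  rw [Real.norm_eq_abs, Real.norm_of_nonneg (Real.rpow_nonneg hl0 γ)] at hl
  linarith [le_abs_self (c + a * Real.log l)]

theorem rpow_sub_one_sq_mul_rpow_le {l γ : ℝ} (hl : 1 ≤ l) (hγ : 0 ≤ γ) (β : ℝ) :
    (l ^ γ - 1) ^ 2 * l ^ (β - 2) ≤ l ^ (β + 2 * (γ - 1)) := by
  have hlγ : 1 ≤ l ^ γ := Real.one_le_rpow hl hγ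
  have hl0 : 0 < l := zero_lt_one.trans_le hl
  calc (l ^ γ - 1) ^ 2 * l ^ (β - 2) ≤ (l ^ γ) ^ 2 * l ^ (β - 2) := by
        gcongr
        linarith
    _ = l ^ (β + 2 * (γ - 1)) := by
        rw [← Real.rpow_natCast, ← Real.rpow_mul hl0.le, ← Real.rpow_add hl0]
        ring_nf

theorem stmt19_general (d : ℕ) (α γ β lam IV I : ℝ)
    (hα : 1 ≤ α) (hγ : 0 < γ) (hlam : 0 < lam)
    (hIV : 0 < IV) (hI : 0 ≤ I)
    (KL D2 : ℝ → ℝ)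
    (hKL : ∀ l : ℝ, 0 < l → KL l = (l ^ γ - 1) * IV - d * Real.log l)
    (hD2 : ∀ l : ℝ, 0 < l → D2 l = (l ^ γ - 1) ^ 2 * l ^ (β - 2) * I)
    (hSLSI : ∀ l : ℝ, 0 < l → lam * (KL l) ^ α ≤ D2 l) :
    α * γ ≤ β + 2 * (γ - 1) := by
  have hKL_ge : ∀ᶠ l : ℝ in atTop, IV / 2 * l ^ γ ≤ KL l := by
    filter_upwards [eventually_half_mul_rpow_le_sub_log hγ hIV d, eventually_gt_atTop 0]
      with l hl hl0
    rwa [hKL l hl0]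
  refine le_of_eventually_mul_rpow_le (c := lam * (IV / 2) ^ α) (C := I) (by positivity) ?_
  filter_upwards [hKL_ge, eventually_ge_atTop 1] with l hKLl hl1
  have hl0 : 0 < l := zero_lt_one.trans_le hl1
  calc lam * (IV / 2) ^ α * l ^ (α * γ) = lam * (IV / 2 * l ^ γ) ^ α := by
        rw [Real.mul_rpow (by positivity) (by positivity), ← Real.rpow_mul hl0.le, mul_comm γ,
          mul_assoc]
    _ ≤ lam * KL l ^ α := by gcongr
    _ ≤ D2 l := hSLSI l hl0
    _ = (l ^ γ - 1) ^ 2 * l ^ (β - 2) * I := hD2 l hl0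
    _ ≤ I * l ^ (β + 2 * (γ - 1)) := by
        rw [mul_comm I]
        exact mul_le_mul_of_nonneg_right (rpow_sub_one_sq_mul_rpow_le hl1 hγ.le β) hI

/-- Failure of the Stein-log-Sobolev inequality with exponent `α` for homogeneous data:
if `V` is `γ`-homogeneous (`γ > 0`), `k` is `β`-homogeneous (`β < 0`), and the
Stein-log-Sobolev inequality `λ [KL(ρ||ρ∞)]^α ≤ D²(ρ||ρ∞)` holds in particular along
the dilations `(S_l)_# ρ∞` — for which
`KL = (l^γ - 1)∫V dρ∞ - d ln l` and `D² = (l^γ-1)² l^{β-2} I` with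
`I = ∫∫ ∇V(x)·k(x-y)∇V(y) dρ∞ dρ∞ < ∞` — then necessarily `αγ ≤ β + 2(γ-1)`;
equivalently, the inequality fails whenever `(α-2)γ > β-2`. -/
theorem stmt19 (d : ℕ) (α γ β lam IV I : ℝ)
    (hα : 1 ≤ α) (hγ : 0 < γ) (hβ : β < 0) (hlam : 0 < lam)
    (hIV : 0 < IV) (hI : 0 ≤ I)
    (KL D2 : ℝ → ℝ)
    (hKL : ∀ l : ℝ, 0 < l → KL l = (l ^ γ - 1) * IV - d * Real.log l)
    (hD2 : ∀ l : ℝ, 0 < l → D2 l = (l ^ γ - 1) ^ 2 * l ^ (β - 2) * I)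
    (hSLSI : ∀ l : ℝ, 0 < l → lam * (KL l) ^ α ≤ D2 l) :
    α * γ ≤ β + 2 * (γ - 1) :=
  stmt19_general d α γ β lam IV I hα hγ hlam hIV hI KL D2 hKL hD2 hSLSI
end
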